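/- Let n ≥ 1 and, for h = 1,…,n, let φ^{(h)} ∈ Mat_{(n+1)×(n+1)}(ℂ) be the matrix whose only nonzero entry is (φ^{(h)})_{1, h+1} = 1. Then in ℂ[z₁,…,z_{n+1}] one has ∑_{h=1}^n I_{φ^{(h)}} = (z_a z_b : 2 ≤ a ≤ b ≤ n+1), and the radical of this ideal is (z₂,…,z_{n+1}). -/

import Mathlib

/-!
The matrix `φ⁽ʰ⁾` is the matrix unit `E₀,ₕ₊₁`. For a matrix unit `E_rc` the generator of
`I_{E_rc}` attached to `i < j` is `z_c z_i` if `j = r`, `-z_c z_j` if `i = r` and `0` otherwise,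
so `I_{E_rc} = (z_c z_k : k ≠ r)`, and summing over `h` gives `J = (z_a z_b : a, b ≠ 0)`.
With `L = (z_a : a ≠ 0)` we have `L² ⊆ J ⊆ L`, and `L` is prime, being the kernel of the
substitution `z_a ↦ 0` (`a ≠ 0`) into a domain; hence `√J = L`.
-/

open MvPolynomial

/-- The variable `z_{k+1}` (0-based index `k`) of `R[z₁,…,z_r]`, or `0` if `k ≥ r`. -/
noncomputable def Zv (R : Type*) [CommRing R] (r k : ℕ) : MvPolynomial (Fin r) R :=
  if h : k < r then X ⟨k, h⟩ else 0

/-- The ideal `I_M` of `R[z₁,…,z_r]` generated by `∑ₖ z_k (M_{jk} z_i − M_{ik} z_j)`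
for all pairs `i < j`. -/
noncomputable def higgsIdeal {R : Type*} [CommRing R] {r : ℕ}
    (M : Matrix (Fin r) (Fin r) R) : Ideal (MvPolynomial (Fin r) R) :=
  Ideal.span { p | ∃ i j : Fin r, i < j ∧
    p = ∑ k : Fin r, X k * (C (M j k) * X i - C (M i k) * X j) }

/-- The `h`-th local matrix of the Higgs field of the Simpson system: the
`(n+1)×(n+1)` matrix whose only nonzero entry is a `1` in position `(1, h+1)`
(1-based), i.e. `(0, h+1)` 0-based. -/
def simpsonMatrix (n : ℕ) (h : Fin n) : Matrix (Fin (n + 1)) (Fin (n + 1)) ℂ :=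
  Matrix.of fun a b => if a = 0 ∧ (b : ℕ) = (h : ℕ) + 1 then 1 else 0

namespace MvPolynomial

variable {σ R : Type*} [CommRing R] [IsDomain R]

theorem isPrime_span_X_image (s : Set σ) :
    (Ideal.span (X '' s : Set (MvPolynomial σ R))).IsPrime := by
  classical
  set I := Ideal.span (X '' s : Set (MvPolynomial σ R))
  let kill : MvPolynomial σ R →ₐ[R] MvPolynomial σ R := aeval fun i => if i ∈ s then 0 else X i
  have mk_comp_kill : (Ideal.Quotient.mkₐ R I).comp kill = Ideal.Quotient.mkₐ R I := by
    ext i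
    by_cases hi : i ∈ s
    · have hXi : X i ∈ I := Ideal.subset_span (Set.mem_image_of_mem X hi)
      simpa [kill, hi] using (Ideal.Quotient.eq_zero_iff_mem.mpr hXi).symm
    · simp [kill, hi]
  have ker_kill : I = RingHom.ker kill := by
    refine le_antisymm (Ideal.span_le.mpr ?_) fun p hp => ?_
    · rintro _ ⟨i, hi, rfl⟩
      simp [kill, hi]
    · have h := congr($mk_comp_kill p)
      rw [AlgHom.comp_apply, RingHom.mem_ker.mp hp, map_zero] at h
      exact Ideal.Quotient.eq_zero_iff_mem.mp (by simpa using h.symm)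
  rw [ker_kill]
  exact RingHom.ker_isPrime _

theorem radical_span_image2_X_mul_X (s : Set σ) :
    (Ideal.span (Set.image2 (fun i j => X i * X j) s s : Set (MvPolynomial σ R))).radical =
      Ideal.span (X '' s) := by
  refine le_antisymm ?_ (Ideal.span_le.mpr ?_)
  · rw [← (isPrime_span_X_image s).radical]
    refine Ideal.radical_mono (Ideal.span_le.mpr ?_)
    rintro _ ⟨i, -, j, hj, rfl⟩
    exact Ideal.mul_mem_left _ _ (Ideal.subset_span ⟨j, hj, rfl⟩)
  · rintro _ ⟨i, hi, rfl⟩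
    exact Ideal.mem_radical_iff.mpr
      ⟨2, by rw [sq]; exact Ideal.subset_span (Set.mem_image2_of_mem hi hi)⟩

end MvPolynomial

section HiggsIdeal

variable {R : Type*} [CommRing R] {m : ℕ}

noncomputable def higgsGenerator (M : Matrix (Fin m) (Fin m) R) (i j : Fin m) :
    MvPolynomial (Fin m) R :=
  ∑ k, X k * (C (M j k) * X i - C (M i k) * X j)

theorem higgsGenerator_mem_higgsIdeal (M : Matrix (Fin m) (Fin m) R) {i j : Fin m}
    (hij : i < j) : higgsGenerator M i j ∈ higgsIdeal M :=
  Ideal.subset_span ⟨i, j, hij, rfl⟩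

theorem higgsGenerator_single_one (r c i j : Fin m) :
    higgsGenerator (Matrix.single r c (1 : R)) i j =
      (if j = r then X c * X i else 0) - (if i = r then X c * X j else 0) := by
  by_cases hj : j = r <;> by_cases hi : i = r <;>
    simp [higgsGenerator, Matrix.single_apply, @eq_comm _ r, hi, hj, mul_comm]

theorem higgsIdeal_single_one (r c : Fin m) :
    higgsIdeal (Matrix.single r c (1 : R)) = Ideal.span ((fun k => X c * X k) '' {r}ᶜ) := by
  refine le_antisymm (Ideal.span_le.mpr ?_) (Ideal.span_le.mpr ?_)
  · rintro _ ⟨i, j, hij, rfl⟩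
    change higgsGenerator _ i j ∈ _
    rw [higgsGenerator_single_one]
    by_cases hj : j = r
    · subst hj
      simpa [hij.ne] using Ideal.subset_span (Set.mem_image_of_mem (fun k => X c * X k) hij.ne)
    by_cases hi : i = r
    · subst hi
      simpa [hj] using Ideal.subset_span (Set.mem_image_of_mem (fun k => X c * X k) hj)
    · simp [hi, hj]
  · rintro _ ⟨k, hk, rfl⟩
    obtain hkr | hrk := lt_or_gt_of_ne hk
    · simpa [higgsGenerator_single_one, hkr.ne] using
        higgsGenerator_mem_higgsIdeal (Matrix.single r c (1 : R)) hkr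
    · simpa [higgsGenerator_single_one, hrk.ne'] using
        higgsGenerator_mem_higgsIdeal (Matrix.single r c (1 : R)) hrk

end HiggsIdeal

theorem simpsonMatrix_eq_single (n : ℕ) (h : Fin n) :
    simpsonMatrix n h = Matrix.single 0 h.succ 1 := by
  ext a b
  rw [simpsonMatrix, Matrix.of_apply, Matrix.single_apply]
  congr 1
  rw [eq_comm (a := a), Fin.ext_iff (a := h.succ), Fin.val_succ, eq_comm (a := (h : ℕ) + 1)]

theorem sum_higgsIdeal_simpsonMatrix (n : ℕ) :
    ∑ h : Fin n, higgsIdeal (simpsonMatrix n h) =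
      Ideal.span (Set.image2 (fun i j => X i * X j) {0}ᶜ {0}ᶜ) := by
  simp_rw [simpsonMatrix_eq_single, higgsIdeal_single_one, Ideal.sum_eq_sup,
    Finset.sup_univ_eq_iSup, ← Ideal.span_iUnion, ← Set.iUnion_image_left, ← Fin.range_succ,
    Set.biUnion_range]

theorem Fin.one_le_val_iff_ne_zero {n : ℕ} (i : Fin (n + 1)) : 1 ≤ (i : ℕ) ↔ i ≠ 0 :=
  Nat.one_le_iff_ne_zero.trans Fin.val_ne_zero_iff

section Zv

variable {R : Type*} [CommRing R]

theorem Zv_of_lt {r a : ℕ} (ha : a < r) : Zv R r a = X ⟨a, ha⟩ := dif_pos ha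

theorem setOf_Zv_eq_image_X (n : ℕ) :
    {p | ∃ a, 1 ≤ a ∧ a ≤ n ∧ p = Zv R (n + 1) a} = X '' {0}ᶜ := by
  ext p
  constructor
  · rintro ⟨a, ha, han, rfl⟩
    have ha' : a < n + 1 := by omega
    exact ⟨⟨a, ha'⟩, (Fin.one_le_val_iff_ne_zero _).mp ha, (Zv_of_lt ha').symm⟩
  · rintro ⟨i, hi, rfl⟩
    exact ⟨i, (Fin.one_le_val_iff_ne_zero i).mpr hi, i.is_le, (Zv_of_lt i.isLt).symm⟩

theorem span_Zv_mul_Zv (n : ℕ) :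
    Ideal.span {p | ∃ a b, 1 ≤ a ∧ a ≤ b ∧ b ≤ n ∧ p = Zv R (n + 1) a * Zv R (n + 1) b} =
      Ideal.span (Set.image2 (fun i j => X i * X j) {0}ᶜ {0}ᶜ) := by
  refine le_antisymm (Ideal.span_mono ?_) (Ideal.span_le.mpr ?_)
  · rintro _ ⟨a, b, ha, hab, hbn, rfl⟩
    have ha' : a < n + 1 := by omega
    have hb' : b < n + 1 := by omega
    refine ⟨⟨a, ha'⟩, (Fin.one_le_val_iff_ne_zero _).mp ha, ⟨b, hb'⟩,
      (Fin.one_le_val_iff_ne_zero _).mp (ha.trans hab), ?_⟩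
    rw [Zv_of_lt ha', Zv_of_lt hb']
  · rintro _ ⟨i, hi, j, hj, rfl⟩
    wlog hij : i ≤ j generalizing i j
    · simpa only [mul_comm] using this j hj i hi (le_of_not_ge hij)
    exact Ideal.subset_span ⟨i, j, (Fin.one_le_val_iff_ne_zero i).mpr hi, hij, j.is_le,
      by rw [Zv_of_lt i.isLt, Zv_of_lt j.isLt]⟩

end Zv

theorem stmt15_general (n : ℕ) :
    (∑ h : Fin n, higgsIdeal (simpsonMatrix n h)) =
      Ideal.span { p | ∃ a b : ℕ, 1 ≤ a ∧ a ≤ b ∧ b ≤ n ∧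
        p = Zv ℂ (n + 1) a * Zv ℂ (n + 1) b } ∧
    (Ideal.span { p : MvPolynomial (Fin (n + 1)) ℂ | ∃ a b : ℕ, 1 ≤ a ∧ a ≤ b ∧ b ≤ n ∧
        p = Zv ℂ (n + 1) a * Zv ℂ (n + 1) b }).radical =
      Ideal.span { p | ∃ a : ℕ, 1 ≤ a ∧ a ≤ n ∧ p = Zv ℂ (n + 1) a } := by
  rw [span_Zv_mul_Zv, setOf_Zv_eq_image_X]
  exact ⟨sum_higgsIdeal_simpsonMatrix n, MvPolynomial.radical_span_image2_X_mul_X _⟩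

/-- The local computation underlying Proposition 6.1(1): for the Simpson system,
`∑ₕ I_{φ⁽ʰ⁾} = (z_a z_b : 2 ≤ a ≤ b ≤ n+1)` (1-based), whose radical is
`(z₂,…,z_{n+1})`. -/
theorem stmt15 (n : ℕ) (hn : 1 ≤ n) :
    (∑ h : Fin n, higgsIdeal (simpsonMatrix n h)) =
      Ideal.span { p | ∃ a b : ℕ, 1 ≤ a ∧ a ≤ b ∧ b ≤ n ∧
        p = Zv ℂ (n + 1) a * Zv ℂ (n + 1) b } ∧
    (Ideal.span { p : MvPolynomial (Fin (n + 1)) ℂ | ∃ a b : ℕ, 1 ≤ a ∧ a ≤ b ∧ b ≤ n ∧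
        p = Zv ℂ (n + 1) a * Zv ℂ (n + 1) b }).radical =
      Ideal.span { p | ∃ a : ℕ, 1 ≤ a ∧ a ≤ n ∧ p = Zv ℂ (n + 1) a } :=
  stmt15_general n
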